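/- arXiv:2408.07088 — 6 statements merged into one kernel-verified Lean document; each statement's English description precedes it below -/
import Mathlib

section
/- After two iterations of single-source edge-wise message passing, the feature of the target link is e^2_{u,r_t,v} = r_{r_t} + 2 · Σ_{(v,y,u) ∈ T} r_{r_t} * r_{r_t} * r_y, where the sum ranges over all triples in T with tail v and head u. -/
/-- After two iterations of single-source edge-wise message passing, the feature of the
target link is `e²_{u,r_t,v} = r_{r_t} + 2 · Σ_{(v,y,u) ∈ T} r_{r_t} * r_{r_t} * r_y`,
where the sum ranges over all triples in `T` with tail `v` and head `u`. -/
theorem target_edge_feature_after_two_iterations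
    {V R : Type*} [Fintype V] [Fintype R] [DecidableEq V] [DecidableEq R]
    (T : Finset (V × R × V)) (d : ℕ) (hd : 1 ≤ d) (r : R → Fin d → ℝ)
    (u v : V) (rt : R) (hT : (u, rt, v) ∈ T) (huv : u ≠ v)
    (h : ℕ → V → Fin d → ℝ) (e : ℕ → V × R × V → Fin d → ℝ)
    (hh0 : ∀ z : V, h 0 z = 0)
    (he0 : ∀ t : V × R × V, e 0 t = if t = (u, rt, v) then r rt else 0)
    (hh : ∀ k : ℕ, 1 ≤ k → ∀ z : V,
      h k z = ∑ t ∈ T.filter (fun t => t.2.2 = z), (h (k - 1) t.1 + e (k - 1) t) * r t.2.1)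
    (he : ∀ k : ℕ, 1 ≤ k → ∀ t ∈ T, e k t = h k t.1 + e (k - 1) t) :
    e 2 (u, rt, v) =
      r rt + (2 : ℝ) • ∑ t ∈ T.filter (fun t => t.1 = v ∧ t.2.2 = u),
        r rt * r rt * r t.2.1 := by
  -- step 1: h 1
  have h1 : ∀ z : V, h 1 z = if z = v then r rt * r rt else 0 := by
    intro z
    rw [hh 1 le_rfl z]
    have hcg : ∀ t ∈ T.filter (fun t => t.2.2 = z),
        (h 0 t.1 + e 0 t) * r t.2.1
          = if t = (u, rt, v) then r rt * r rt else 0 := by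
      intro t ht
      rw [hh0, he0, zero_add]
      by_cases hc : t = (u, rt, v)
      · subst hc; simp
      · simp [hc]
    rw [Finset.sum_congr rfl hcg, Finset.sum_ite_eq' (Finset.filter (fun t => t.2.2 = z) T)
      (u, rt, v) (fun _ => r rt * r rt)]
    by_cases hz : z = v
    · subst hz; simp [Finset.mem_filter, hT]
    · simp only [Finset.mem_filter]
      rw [if_neg (fun hc => hz hc.2.symm), if_neg hz]
  -- step 2: e 1 on target
  have e1t : e 1 (u, rt, v) = r rt := by
    rw [he 1 le_rfl _ hT, h1, he0]
    simp [huv]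
  -- h 2 u
  have h2u : h 2 u = ∑ t ∈ T.filter (fun t => t.1 = v ∧ t.2.2 = u),
      (r rt * r rt * r t.2.1 + r rt * r rt * r t.2.1) := by
    rw [hh 2 (by norm_num) u]
    have hcg : ∀ t ∈ T.filter (fun t => t.2.2 = u),
        (h 1 t.1 + e 1 t) * r t.2.1
          = if t.1 = v then r rt * r rt * r t.2.1 + r rt * r rt * r t.2.1 else 0 := by
      intro t ht
      rw [Finset.mem_filter] at ht
      have ht0 : e 0 t = 0 := by
        rw [he0]
        have : t ≠ (u, rt, v) := by
          intro hc; exact huv (by rw [hc] at ht; exact ht.2.symm)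
        simp [this]
      rw [he 1 le_rfl t ht.1, ht0, h1]
      by_cases hc : t.1 = v
      · simp [hc]; ring
      · simp [hc]
    rw [Finset.sum_congr rfl hcg, Finset.sum_ite, Finset.sum_const_zero, add_zero,
      Finset.filter_filter]
    apply Finset.sum_congr _ (fun _ _ => rfl)
    apply Finset.filter_congr
    intro t ht
    simp [and_comm]
  -- finish
  have e2 : e 2 (u, rt, v) = h 2 u + e 1 (u, rt, v) := he 2 (by norm_num) _ hT
  rw [e2, e1t, h2u, add_comm]
  congr 1
  rw [two_smul, ← Finset.sum_add_distrib]
end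

section
/- For every node z and every k ≥ 1, the node feature admits the walk expansion h^k_z = Σ_{j=1}^{k} Σ_{(s_{j-1},…,s_0)} e^{k-j}_{s_{j-1}} * r_{rel(s_{j-1})} * r_{rel(s_{j-2})} * ⋯ * r_{rel(s_0)}, where the inner sum ranges over all directed walks (s_{j-1},…,s_0) of length j in T ending at z, rel(s) denotes the relation (second component) of the triple s, and the product includes the relation embeddings of all j triples of the walk. -/
open Finset

lemma sum_walk_succ {V R : Type*} [Fintype V] [Fintype R] [DecidableEq V] [DecidableEq R]
    (T : Finset (V × R × V)) (d : ℕ) (r : R → Fin d → ℝ)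
    (f : V × R × V → Fin d → ℝ) (z : V) (j : ℕ) :
    ∑ w ∈ Finset.univ.filter (fun w : Fin (j + 1 + 1) → V × R × V =>
        (∀ m : Fin (j + 1 + 1), w m ∈ T) ∧
        (∀ m m' : Fin (j + 1 + 1), (m' : ℕ) = (m : ℕ) + 1 → (w m).2.2 = (w m').1) ∧
        (w (Fin.last (j + 1))).2.2 = z),
      f (w 0) * ∏ m : Fin (j + 1 + 1), r (w m).2.1
    = ∑ t ∈ T.filter (fun t => t.2.2 = z),
        (∑ w ∈ Finset.univ.filter (fun w : Fin (j + 1) → V × R × V =>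
            (∀ m : Fin (j + 1), w m ∈ T) ∧
            (∀ m m' : Fin (j + 1), (m' : ℕ) = (m : ℕ) + 1 → (w m).2.2 = (w m').1) ∧
            (w (Fin.last j)).2.2 = t.1),
          f (w 0) * ∏ m : Fin (j + 1), r (w m).2.1) * r t.2.1 := by
  simp only [Finset.sum_mul]
  rw [Finset.sum_sigma']
  refine (Finset.sum_nbij' (fun p => Fin.snoc p.2 p.1)
    (fun w => ⟨w (Fin.last (j + 1)), fun m => w (Fin.castSucc m)⟩) ?_ ?_ ?_ ?_ ?_).symm
  · -- pair to walk
    rintro ⟨t, w⟩ hp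
    simp only [Finset.mem_sigma, mem_filter, mem_univ, true_and] at hp ⊢
    obtain ⟨⟨htT, htz⟩, hwT, hchain, hlast⟩ := hp
    refine ⟨?_, ?_, ?_⟩
    · intro m
      induction m using Fin.lastCases with
      | last => simpa using htT
      | cast i => simpa using hwT i
    · intro m m' hmm'
      induction m' using Fin.lastCases with
      | last =>
        have hm : (m : ℕ) = j := by have := hmm'; simp at this; omega
        have : m = Fin.castSucc (Fin.last j) := by
          apply Fin.ext; simpa using hm
        rw [this]
        simpa using hlast
      | cast i' =>
        have hi' : (i' : ℕ) = (m : ℕ) + 1 := by simpa using hmm'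
        have hmlt : (m : ℕ) < j + 1 := by omega
        set m₀ : Fin (j + 1) := ⟨(m : ℕ), hmlt⟩ with hm₀
        have hmeq : m = Fin.castSucc m₀ := by apply Fin.ext; simp [hm₀]
        rw [hmeq]
        simpa using hchain m₀ i' (by simp [hm₀, hi'])
    · simpa using htz
  · -- walk to pair
    intro w hw
    simp only [mem_filter, mem_univ, true_and, Finset.mem_sigma] at hw ⊢
    obtain ⟨hwT, hchain, hlast⟩ := hw
    refine ⟨⟨hwT _, hlast⟩, fun m => hwT _, fun m m' hmm' => ?_, ?_⟩
    · exact hchain (Fin.castSucc m) (Fin.castSucc m') (by simpa using hmm')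
    · exact hchain (Fin.castSucc (Fin.last j)) (Fin.last (j + 1)) (by simp)
  · -- left inverse
    rintro ⟨t, w⟩ _
    simp
  · -- right inverse
    intro w _
    funext i
    induction i using Fin.lastCases with
    | last => simp
    | cast i => simp
  · -- values
    rintro ⟨t, w⟩ _
    have h0 : (Fin.snoc w t : Fin (j + 1 + 1) → V × R × V) 0 = w 0 := by
      rw [show (0 : Fin (j + 1 + 1)) = Fin.castSucc 0 by simp, Fin.snoc_castSucc]
    have hp : (∏ m : Fin (j + 1 + 1), r ((Fin.snoc w t : Fin (j + 1 + 1) → V × R × V) m).2.1)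
        = (∏ m : Fin (j + 1), r (w m).2.1) * r t.2.1 := by
      rw [Fin.prod_univ_castSucc]; simp
    dsimp only
    rw [h0, hp, mul_assoc]

/-- Sum over length-1 walks ending at `z`. -/
lemma sum_walk_one {V R : Type*} [Fintype V] [Fintype R] [DecidableEq V] [DecidableEq R]
    (T : Finset (V × R × V)) (d : ℕ) (r : R → Fin d → ℝ)
    (f : V × R × V → Fin d → ℝ) (z : V) :
    ∑ w ∈ Finset.univ.filter (fun w : Fin (0 + 1) → V × R × V =>
        (∀ m : Fin (0 + 1), w m ∈ T) ∧
        (∀ m m' : Fin (0 + 1), (m' : ℕ) = (m : ℕ) + 1 → (w m).2.2 = (w m').1) ∧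
        (w (Fin.last 0)).2.2 = z),
      f (w 0) * ∏ m : Fin (0 + 1), r (w m).2.1
    = ∑ t ∈ T.filter (fun t => t.2.2 = z), f t * r t.2.1 := by
  refine Finset.sum_nbij' (fun w => w 0) (fun t => fun _ => t) ?_ ?_ ?_ ?_ ?_
  · intro w hw
    simp only [mem_filter, mem_univ, true_and] at hw ⊢
    exact ⟨hw.1 0, hw.2.2⟩
  · intro t ht
    simp only [mem_filter, mem_univ, true_and] at ht ⊢
    refine ⟨fun _ => ht.1, fun m m' hmm' => ?_, ht.2⟩
    · omega
  · intro w _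
    funext i
    have : i = 0 := Fin.fin_one_eq_zero i
    rw [this]
  · intro t _; rfl
  · intro w _
    simp [Fin.prod_univ_one]



/-- Walk expansion of node features: for every node `z` and every `k ≥ 1`,
`h^k_z` is the sum over walk lengths `j = 1, …, k` (written as `j + 1` with
`j ∈ range k`) and over all directed walks in `T` of that length ending at `z`
(indexed so that `w 0` is the earliest triple and the head of the last triple is
`z`) of `e^{k-j}` of the earliest triple times the Hadamard product of the
relation embeddings of all triples of the walk. -/
theorem node_feature_walk_expansion
    {V R : Type*} [Fintype V] [Fintype R] [DecidableEq V] [DecidableEq R]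
    (T : Finset (V × R × V)) (d : ℕ) (hd : 1 ≤ d) (r : R → Fin d → ℝ)
    (h : ℕ → V → Fin d → ℝ) (e : ℕ → V × R × V → Fin d → ℝ)
    (hh0 : ∀ z : V, h 0 z = 0)
    (hh : ∀ k : ℕ, 1 ≤ k → ∀ z : V,
      h k z = ∑ t ∈ T.filter (fun t => t.2.2 = z), (h (k - 1) t.1 + e (k - 1) t) * r t.2.1)
    (he : ∀ k : ℕ, 1 ≤ k → ∀ t ∈ T, e k t = h k t.1 + e (k - 1) t)
    (z : V) (k : ℕ) (hk : 1 ≤ k) :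
    h k z =
      ∑ j ∈ Finset.range k,
        ∑ w ∈ Finset.univ.filter (fun w : Fin (j + 1) → V × R × V =>
            (∀ m : Fin (j + 1), w m ∈ T) ∧
            (∀ m m' : Fin (j + 1), (m' : ℕ) = (m : ℕ) + 1 → (w m).2.2 = (w m').1) ∧
            (w (Fin.last j)).2.2 = z),
          e (k - (j + 1)) (w 0) * ∏ m : Fin (j + 1), r (w m).2.1 := by
  induction k, hk using Nat.le_induction generalizing z with
  | base =>
    rw [hh 1 le_rfl z]
    simp only [Nat.sub_self, Finset.sum_range_one]
    rw [sum_walk_one T d r (e 0) z]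
    refine Finset.sum_congr rfl fun t _ => ?_
    rw [hh0, zero_add]
  | succ k hk ih =>
    rw [hh (k + 1) (by omega) z]
    simp only [Nat.add_sub_cancel]
    have expand : ∀ t ∈ T.filter (fun t => t.2.2 = z),
        (h k t.1 + e k t) * r t.2.1 = h k t.1 * r t.2.1 + e k t * r t.2.1 := by
      intro t _; rw [add_mul]
    rw [Finset.sum_congr rfl expand, Finset.sum_add_distrib]
    -- second summand: length-1 walks
    have h1 : (∑ t ∈ T.filter (fun t => t.2.2 = z), e k t * r t.2.1)
        = ∑ w ∈ Finset.univ.filter (fun w : Fin (0 + 1) → V × R × V =>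
            (∀ m : Fin (0 + 1), w m ∈ T) ∧
            (∀ m m' : Fin (0 + 1), (m' : ℕ) = (m : ℕ) + 1 → (w m).2.2 = (w m').1) ∧
            (w (Fin.last 0)).2.2 = z),
          e (k + 1 - (0 + 1)) (w 0) * ∏ m : Fin (0 + 1), r (w m).2.1 := by
      rw [sum_walk_one T d r (e (k + 1 - (0 + 1))) z]
      simp
    -- first summand: longer walks
    have h2 : (∑ t ∈ T.filter (fun t => t.2.2 = z), h k t.1 * r t.2.1)
        = ∑ j ∈ Finset.range k,
            ∑ w ∈ Finset.univ.filter (fun w : Fin (j + 1 + 1) → V × R × V =>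
                (∀ m : Fin (j + 1 + 1), w m ∈ T) ∧
                (∀ m m' : Fin (j + 1 + 1), (m' : ℕ) = (m : ℕ) + 1 → (w m).2.2 = (w m').1) ∧
                (w (Fin.last (j + 1))).2.2 = z),
              e (k + 1 - (j + 1 + 1)) (w 0) * ∏ m : Fin (j + 1 + 1), r (w m).2.1 := by
      have : ∀ t ∈ T.filter (fun t => t.2.2 = z), h k t.1 * r t.2.1
          = (∑ j ∈ Finset.range k,
              ∑ w ∈ Finset.univ.filter (fun w : Fin (j + 1) → V × R × V =>
                  (∀ m : Fin (j + 1), w m ∈ T) ∧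
                  (∀ m m' : Fin (j + 1), (m' : ℕ) = (m : ℕ) + 1 → (w m).2.2 = (w m').1) ∧
                  (w (Fin.last j)).2.2 = t.1),
                e (k - (j + 1)) (w 0) * ∏ m : Fin (j + 1), r (w m).2.1) * r t.2.1 := by
        intro t _; rw [ih t.1]
      rw [Finset.sum_congr rfl this]
      have expand2 : ∀ t ∈ T.filter (fun t => t.2.2 = z),
          (∑ j ∈ Finset.range k,
              ∑ w ∈ Finset.univ.filter (fun w : Fin (j + 1) → V × R × V =>
                  (∀ m : Fin (j + 1), w m ∈ T) ∧
                  (∀ m m' : Fin (j + 1), (m' : ℕ) = (m : ℕ) + 1 → (w m).2.2 = (w m').1) ∧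
                  (w (Fin.last j)).2.2 = t.1),
                e (k - (j + 1)) (w 0) * ∏ m : Fin (j + 1), r (w m).2.1) * r t.2.1
          = ∑ j ∈ Finset.range k,
              (∑ w ∈ Finset.univ.filter (fun w : Fin (j + 1) → V × R × V =>
                  (∀ m : Fin (j + 1), w m ∈ T) ∧
                  (∀ m m' : Fin (j + 1), (m' : ℕ) = (m : ℕ) + 1 → (w m).2.2 = (w m').1) ∧
                  (w (Fin.last j)).2.2 = t.1),
                e (k - (j + 1)) (w 0) * ∏ m : Fin (j + 1), r (w m).2.1) * r t.2.1 := by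
        intro t _; rw [Finset.sum_mul]
      rw [Finset.sum_congr rfl expand2, Finset.sum_comm]
      refine Finset.sum_congr rfl fun j _ => ?_
      have hidx : k + 1 - (j + 1 + 1) = k - (j + 1) := by omega
      rw [hidx]
      exact (sum_walk_succ T d r (e (k - (j + 1))) z j).symm
    rw [h1, h2, Finset.sum_range_succ' _ k]
end

section
/- Under single-source initialization, message passing only touches nodes reachable from the head of the target link: for every k ≥ 0 and every node z that is not reachable from v in T, h^k_z = 0. -/
/-! Every message reaching a node `z` travels along an edge `(x, y, z)` of `T`, and an edge
with an unreachable head `z` has an unreachable tail `x`. Hence, by induction on `k`, all node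
features `h^k` and all edge features `e^k` vanish off the part of `T` reachable from `v`; at
`k = 0` the only nonzero edge feature sits on the target edge, whose head `v` is reachable. -/

/-- `ReachableFrom T v z` means `z = v` or there is a nonempty sequence of triples of `T`,
chained head-to-tail, whose first triple has tail `v` and whose last triple has head `z`. -/
def ReachableFrom {V R : Type*} (T : Finset (V × R × V)) (v z : V) : Prop :=
  z = v ∨ ∃ (l : List (V × R × V)) (hne : l ≠ []),
    (∀ t ∈ l, t ∈ T) ∧ l.Chain' (fun a b => a.2.2 = b.1) ∧
    (l.head hne).1 = v ∧ (l.getLast hne).2.2 = z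

namespace ReachableFrom

variable {V R : Type*} {T : Finset (V × R × V)} {v : V}

theorem refl : ReachableFrom T v v := Or.inl rfl

theorem step {t : V × R × V} (ht : t ∈ T) (hreach : ReachableFrom T v t.1) :
    ReachableFrom T v t.2.2 := by
  rcases hreach with rfl | ⟨l, hne, hmem, hchain, hhead, hlast⟩
  · exact Or.inr ⟨[t], List.cons_ne_nil t [], by simpa using ht, List.isChain_singleton t, rfl, rfl⟩
  · refine Or.inr ⟨l ++ [t], by simp, ?_, ?_, by rwa [List.head_append_of_ne_nil hne], by simp⟩
    · intro s hs
      rcases List.mem_append.mp hs with hs | hs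
      · exact hmem s hs
      · rwa [List.mem_singleton.mp hs]
    · refine List.isChain_append.mpr ⟨hchain, List.isChain_singleton t, ?_⟩
      rintro x hx y ⟨⟩
      rw [List.getLast?_eq_some_getLast hne, Option.mem_def, Option.some_inj] at hx
      rw [← hx, hlast]

end ReachableFrom

section MessagePassing

variable {V R M : Type*} [DecidableEq V] [NonUnitalNonAssocSemiring M]
  {T : Finset (V × R × V)} {v : V} {r : R → M} {h : ℕ → V → M} {e : ℕ → V × R × V → M}

theorem sum_messages_eq_zero_of_not_reachable (f : V → M) (g : V × R × V → M)
    (hf : ∀ z, ¬ ReachableFrom T v z → f z = 0)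
    (hg : ∀ t ∈ T, ¬ ReachableFrom T v t.2.2 → g t = 0)
    {z : V} (hz : ¬ ReachableFrom T v z) :
    ∑ t ∈ T.filter (fun t => t.2.2 = z), (f t.1 + g t) * r t.2.1 = 0 := by
  refine Finset.sum_eq_zero fun t ht => ?_
  obtain ⟨htT, rfl⟩ := Finset.mem_filter.mp ht
  rw [hf t.1 (mt (ReachableFrom.step htT) hz), hg t htT hz, add_zero, zero_mul]

theorem features_eq_zero_of_not_reachable
    (hh0 : ∀ z, ¬ ReachableFrom T v z → h 0 z = 0)
    (he0 : ∀ t ∈ T, ¬ ReachableFrom T v t.2.2 → e 0 t = 0)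
    (hh : ∀ k z, h (k + 1) z = ∑ t ∈ T.filter (fun t => t.2.2 = z), (h k t.1 + e k t) * r t.2.1)
    (he : ∀ k, ∀ t ∈ T, e (k + 1) t = h (k + 1) t.1 + e k t) (k : ℕ) :
    (∀ z, ¬ ReachableFrom T v z → h k z = 0) ∧
      ∀ t ∈ T, ¬ ReachableFrom T v t.2.2 → e k t = 0 := by
  induction k with
  | zero => exact ⟨hh0, he0⟩
  | succ k ih =>
    have hk : ∀ z, ¬ ReachableFrom T v z → h (k + 1) z = 0 := fun z hz => by
      rw [hh k z, sum_messages_eq_zero_of_not_reachable _ _ ih.1 ih.2 hz]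
    refine ⟨hk, fun t ht hreach => ?_⟩
    rw [he k t ht, hk t.1 (mt (ReachableFrom.step ht) hreach), ih.2 t ht hreach, add_zero]

end MessagePassing

theorem node_feature_zero_off_reachable_set_general
    {V R : Type*} [DecidableEq V] [DecidableEq R]
    (T : Finset (V × R × V)) (d : ℕ) (r : R → Fin d → ℝ)
    (u v : V) (rt : R)
    (h : ℕ → V → Fin d → ℝ) (e : ℕ → V × R × V → Fin d → ℝ)
    (hh0 : ∀ z : V, h 0 z = 0)
    (he0 : ∀ t : V × R × V, e 0 t = if t = (u, rt, v) then r rt else 0)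
    (hh : ∀ k : ℕ, 1 ≤ k → ∀ z : V,
      h k z = ∑ t ∈ T.filter (fun t => t.2.2 = z), (h (k - 1) t.1 + e (k - 1) t) * r t.2.1)
    (he : ∀ k : ℕ, 1 ≤ k → ∀ t ∈ T, e k t = h k t.1 + e (k - 1) t) :
    ∀ (k : ℕ) (z : V), ¬ ReachableFrom T v z → h k z = 0 := by
  have he0_zero : ∀ t ∈ T, ¬ ReachableFrom T v t.2.2 → e 0 t = 0 := by
    rintro t - hreach
    have ht : t ≠ (u, rt, v) := by rintro rfl; exact hreach ReachableFrom.refl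
    rw [he0, if_neg ht]
  intro k
  exact (features_eq_zero_of_not_reachable (fun z _ => hh0 z) he0_zero
    (fun k => hh (k + 1) k.succ_pos) (fun k => he (k + 1) k.succ_pos) k).1

/-- Under single-source initialization, message passing only touches nodes reachable from
the head `v` of the target link: for every `k ≥ 0` and every node `z` not reachable from
`v` in `T`, `h^k_z = 0`. -/
theorem node_feature_zero_off_reachable_set
    {V R : Type*} [Fintype V] [Fintype R] [DecidableEq V] [DecidableEq R]
    (T : Finset (V × R × V)) (d : ℕ) (hd : 1 ≤ d) (r : R → Fin d → ℝ)
    (u v : V) (rt : R) (hT : (u, rt, v) ∈ T) (huv : u ≠ v)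
    (h : ℕ → V → Fin d → ℝ) (e : ℕ → V × R × V → Fin d → ℝ)
    (hh0 : ∀ z : V, h 0 z = 0)
    (he0 : ∀ t : V × R × V, e 0 t = if t = (u, rt, v) then r rt else 0)
    (hh : ∀ k : ℕ, 1 ≤ k → ∀ z : V,
      h k z = ∑ t ∈ T.filter (fun t => t.2.2 = z), (h (k - 1) t.1 + e (k - 1) t) * r t.2.1)
    (he : ∀ k : ℕ, 1 ≤ k → ∀ t ∈ T, e k t = h k t.1 + e (k - 1) t) :
    ∀ (k : ℕ) (z : V), ¬ ReachableFrom T v z → h k z = 0 :=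
  node_feature_zero_off_reachable_set_general T d r u v rt h e hh0 he0 hh he
end

section
/- Under single-source initialization, every non-target edge whose source is not reachable from the head of the target link keeps a zero feature forever: for every k ≥ 0 and every triple (x,y,z) ∈ T with (x,y,z) ≠ (u,r_t,v) such that x is not reachable from v in T, e^k_{x,y,z} = 0. -/
namespace ReachableFrom

variable {V R : Type*} {T : Finset (V × R × V)} {v : V}

theorem of_mem {x z : V} {y : R} (hxyz : (x, y, z) ∈ T) (hx : ReachableFrom T v x) :
    ReachableFrom T v z := by
  right
  rcases hx with rfl | ⟨l, hne, hmem, hchain, hhead, hlast⟩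
  · exact ⟨[(x, y, z)], by simp, by simpa using hxyz, List.isChain_singleton _, rfl, rfl⟩
  refine ⟨l ++ [(x, y, z)], by simp, ?_, ?_, by rwa [List.head_append_of_ne_nil hne], by simp⟩
  · intro t ht
    rcases List.mem_append.mp ht with ht | ht
    · exact hmem t ht
    · rwa [List.mem_singleton.mp ht]
  · refine List.isChain_append.mpr ⟨hchain, List.isChain_singleton _, fun a ha b hb => ?_⟩
    rw [List.getLast?_eq_some_getLast hne, Option.mem_some_iff] at ha
    simp only [List.head?_cons, Option.mem_some_iff] at hb
    rw [← ha, ← hb, hlast]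

end ReachableFrom

section SingleSource

variable {V R M : Type*} [DecidableEq V] [NonUnitalNonAssocSemiring M]
  {T : Finset (V × R × V)} {v : V} {t₀ : V × R × V} {w : R → M}
  {h : ℕ → V → M} {e : ℕ → V × R × V → M}

theorem node_feature_succ_eq_zero_of_not_reachable
    (hh : ∀ k z, h (k + 1) z = ∑ t ∈ T.filter (fun t => t.2.2 = z), (h k t.1 + e k t) * w t.2.1)
    (ht₀ : t₀.2.2 = v) {k : ℕ} (hk : ∀ x, ¬ ReachableFrom T v x → h k x = 0)
    (ek : ∀ t ∈ T, t ≠ t₀ → ¬ ReachableFrom T v t.1 → e k t = 0)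
    {z : V} (hz : ¬ ReachableFrom T v z) : h (k + 1) z = 0 := by
  rw [hh]
  refine Finset.sum_eq_zero fun t ht => ?_
  obtain ⟨htT, rfl⟩ := Finset.mem_filter.mp ht
  have hne : t ≠ t₀ := fun heq => hz (Or.inl (heq ▸ ht₀))
  have hx : ¬ ReachableFrom T v t.1 := fun hx => hz (.of_mem htT hx)
  rw [hk _ hx, ek t htT hne hx, add_zero, zero_mul]

theorem features_eq_zero_off_reachable
    (hh0 : ∀ z, h 0 z = 0) (he0 : ∀ t, t ≠ t₀ → e 0 t = 0)
    (hh : ∀ k z, h (k + 1) z = ∑ t ∈ T.filter (fun t => t.2.2 = z), (h k t.1 + e k t) * w t.2.1)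
    (he : ∀ k, ∀ t ∈ T, e (k + 1) t = h (k + 1) t.1 + e k t)
    (ht₀ : t₀.2.2 = v) (k : ℕ) :
    (∀ z, ¬ ReachableFrom T v z → h k z = 0) ∧
      ∀ t ∈ T, t ≠ t₀ → ¬ ReachableFrom T v t.1 → e k t = 0 := by
  induction k with
  | zero => exact ⟨fun z _ => hh0 z, fun t _ hne _ => he0 t hne⟩
  | succ k ih =>
    have hk z := node_feature_succ_eq_zero_of_not_reachable (z := z) hh ht₀ ih.1 ih.2
    refine ⟨hk, fun t htT hne hx => ?_⟩
    rw [he k t htT, hk t.1 hx, ih.2 t htT hne hx, add_zero]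

end SingleSource

theorem edge_feature_zero_off_reachable_set_general
    {V R : Type*} [DecidableEq V] [DecidableEq R]
    (T : Finset (V × R × V)) (d : ℕ) (r : R → Fin d → ℝ)
    (u v : V) (rt : R)
    (h : ℕ → V → Fin d → ℝ) (e : ℕ → V × R × V → Fin d → ℝ)
    (hh0 : ∀ z : V, h 0 z = 0)
    (he0 : ∀ t : V × R × V, e 0 t = if t = (u, rt, v) then r rt else 0)
    (hh : ∀ k : ℕ, 1 ≤ k → ∀ z : V,
      h k z = ∑ t ∈ T.filter (fun t => t.2.2 = z), (h (k - 1) t.1 + e (k - 1) t) * r t.2.1)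
    (he : ∀ k : ℕ, 1 ≤ k → ∀ t ∈ T, e k t = h k t.1 + e (k - 1) t) :
    ∀ (k : ℕ), ∀ t ∈ T, t ≠ (u, rt, v) → ¬ ReachableFrom T v t.1 → e k t = 0 :=
  fun k => (features_eq_zero_off_reachable (t₀ := (u, rt, v)) hh0
    (fun t ht => by rw [he0, if_neg ht]) (fun k => hh (k + 1) k.succ_pos)
    (fun k => he (k + 1) k.succ_pos) rfl k).2

/-- Under single-source initialization, every non-target edge whose source is not
reachable from the head `v` of the target link keeps a zero feature forever: for every
`k ≥ 0` and every `(x,y,z) ∈ T` with `(x,y,z) ≠ (u,r_t,v)` such that `x` is not reachable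
from `v` in `T`, `e^k_{x,y,z} = 0`. -/
theorem edge_feature_zero_off_reachable_set
    {V R : Type*} [Fintype V] [Fintype R] [DecidableEq V] [DecidableEq R]
    (T : Finset (V × R × V)) (d : ℕ) (hd : 1 ≤ d) (r : R → Fin d → ℝ)
    (u v : V) (rt : R) (hT : (u, rt, v) ∈ T) (huv : u ≠ v)
    (h : ℕ → V → Fin d → ℝ) (e : ℕ → V × R × V → Fin d → ℝ)
    (hh0 : ∀ z : V, h 0 z = 0)
    (he0 : ∀ t : V × R × V, e 0 t = if t = (u, rt, v) then r rt else 0)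
    (hh : ∀ k : ℕ, 1 ≤ k → ∀ z : V,
      h k z = ∑ t ∈ T.filter (fun t => t.2.2 = z), (h (k - 1) t.1 + e (k - 1) t) * r t.2.1)
    (he : ∀ k : ℕ, 1 ≤ k → ∀ t ∈ T, e k t = h k t.1 + e (k - 1) t) :
    ∀ (k : ℕ), ∀ t ∈ T, t ≠ (u, rt, v) → ¬ ReachableFrom T v t.1 → e k t = 0 :=
  edge_feature_zero_off_reachable_set_general T d r u v rt h e hh0 he0 hh he
end

section
/- If u is not reachable from v in T (equivalently, the graph contains no closed walk through the target link), then the target-link feature never changes: e^k_{u,r_t,v} = r_{r_t} for every k ≥ 0. -/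
theorem ReachableFrom.step_s9 {V R : Type*} {T : Finset (V × R × V)} {v x z : V} {y : R}
    (hx : ReachableFrom T v x) (ht : (x, y, z) ∈ T) : ReachableFrom T v z := by
  rcases hx with rfl | ⟨l, hne, hmem, hchain, hhead, hlast⟩
  · exact Or.inr ⟨[(x, y, z)], List.cons_ne_nil _ _, by simpa using ht,
      List.isChain_singleton _, rfl, rfl⟩
  refine Or.inr ⟨l ++ [(x, y, z)], by simp, ?_, ?_, ?_, by simp⟩
  · intro t htl
    rcases List.mem_append.1 htl with htl | htl
    · exact hmem t htl
    · rwa [List.mem_singleton.1 htl]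
  · refine hchain.append (List.isChain_singleton _) fun a ha b hb => ?_
    rw [List.getLast?_eq_some_getLast hne, Option.mem_some_iff] at ha
    rw [List.head?_cons, Option.mem_some_iff] at hb
    rw [← ha, ← hb, hlast]
  · rwa [List.head_append_of_ne_nil hne]

/-- The edge-wise GNN recursion, indexed by `k + 1` so that no truncated `k - 1` appears. -/
structure EdgewiseRecursion {V R A : Type*} [DecidableEq V] [NonUnitalNonAssocSemiring A]
    (T : Finset (V × R × V)) (r : R → A) (h : ℕ → V → A) (e : ℕ → V × R × V → A) : Prop where
  node : ∀ k z, h (k + 1) z = ∑ t ∈ T.filter (fun t => t.2.2 = z), (h k t.1 + e k t) * r t.2.1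
  edge : ∀ k, ∀ t ∈ T, e (k + 1) t = h (k + 1) t.1 + e k t

namespace EdgewiseRecursion

variable {V R A : Type*} [DecidableEq V] [NonUnitalNonAssocSemiring A]
  {T : Finset (V × R × V)} {r : R → A} {h : ℕ → V → A} {e : ℕ → V × R × V → A} {v : V}

theorem eq_init_of_not_reachable (hrec : EdgewiseRecursion T r h e)
    (hh0 : ∀ z, h 0 z = 0) (he0 : ∀ t ∈ T, t.2.2 ≠ v → e 0 t = 0) (k : ℕ) :
    (∀ z, ¬ ReachableFrom T v z → h k z = 0) ∧
      ∀ t ∈ T, ¬ ReachableFrom T v t.1 → e k t = e 0 t := by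
  induction k with
  | zero => exact ⟨fun z _ => hh0 z, fun _ _ _ => rfl⟩
  | succ n ih =>
    have hnode : ∀ z, ¬ ReachableFrom T v z → h (n + 1) z = 0 := by
      intro z hz
      rw [hrec.node]
      refine Finset.sum_eq_zero fun t ht => ?_
      obtain ⟨htT, rfl⟩ := Finset.mem_filter.1 ht
      have htail : ¬ ReachableFrom T v t.1 := fun hx => hz (hx.step_s9 htT)
      have hhead : t.2.2 ≠ v := fun hv => hz (Or.inl hv)
      rw [ih.1 _ htail, ih.2 t htT htail, he0 t htT hhead, add_zero, zero_mul]
    refine ⟨hnode, fun t ht htail => ?_⟩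
    rw [hrec.edge n t ht, hnode _ htail, zero_add, ih.2 t ht htail]

end EdgewiseRecursion

theorem target_edge_feature_constant_without_closed_walk_general
    {V R : Type*} [DecidableEq V] [DecidableEq R]
    (T : Finset (V × R × V)) (d : ℕ) (r : R → Fin d → ℝ)
    (u v : V) (rt : R) (hT : (u, rt, v) ∈ T)
    (h : ℕ → V → Fin d → ℝ) (e : ℕ → V × R × V → Fin d → ℝ)
    (hh0 : ∀ z : V, h 0 z = 0)
    (he0 : ∀ t : V × R × V, e 0 t = if t = (u, rt, v) then r rt else 0)
    (hh : ∀ k : ℕ, 1 ≤ k → ∀ z : V,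
      h k z = ∑ t ∈ T.filter (fun t => t.2.2 = z), (h (k - 1) t.1 + e (k - 1) t) * r t.2.1)
    (he : ∀ k : ℕ, 1 ≤ k → ∀ t ∈ T, e k t = h k t.1 + e (k - 1) t)
    (hnr : ¬ ReachableFrom T v u) :
    ∀ k : ℕ, e k (u, rt, v) = r rt := by
  have hrec : EdgewiseRecursion T r h e :=
    ⟨fun k => hh (k + 1) k.succ_pos, fun k => he (k + 1) k.succ_pos⟩
  have he0_supp : ∀ t ∈ T, t.2.2 ≠ v → e 0 t = 0 := by
    rintro t - hv
    rw [he0, if_neg]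
    rintro rfl
    exact hv rfl
  intro k
  rw [(hrec.eq_init_of_not_reachable hh0 he0_supp k).2 _ hT hnr, he0, if_pos rfl]

/-- If `u` is not reachable from `v` in `T` (no closed walk through the target link),
then the target-link feature never changes: `e^k_{u,r_t,v} = r_{r_t}` for every `k ≥ 0`. -/
theorem target_edge_feature_constant_without_closed_walk
    {V R : Type*} [Fintype V] [Fintype R] [DecidableEq V] [DecidableEq R]
    (T : Finset (V × R × V)) (d : ℕ) (hd : 1 ≤ d) (r : R → Fin d → ℝ)
    (u v : V) (rt : R) (hT : (u, rt, v) ∈ T) (huv : u ≠ v)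
    (h : ℕ → V → Fin d → ℝ) (e : ℕ → V × R × V → Fin d → ℝ)
    (hh0 : ∀ z : V, h 0 z = 0)
    (he0 : ∀ t : V × R × V, e 0 t = if t = (u, rt, v) then r rt else 0)
    (hh : ∀ k : ℕ, 1 ≤ k → ∀ z : V,
      h k z = ∑ t ∈ T.filter (fun t => t.2.2 = z), (h (k - 1) t.1 + e (k - 1) t) * r t.2.1)
    (he : ∀ k : ℕ, 1 ≤ k → ∀ t ∈ T, e k t = h k t.1 + e (k - 1) t)
    (hnr : ¬ ReachableFrom T v u) :
    ∀ k : ℕ, e k (u, rt, v) = r rt :=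
  target_edge_feature_constant_without_closed_walk_general T d r u v rt hT h e hh0 he0 hh he hnr
end

section
/- In the general-operator setting, for every node z and every k ≥ 1 the node feature admits the walk expansion h^k_z = ⊕_{j=1}^{k} ⊕_{(s_{j-1},…,s_0)} ((⋯((e^{k-j}_{s_{j-1}} ⊗ r_{rel(s_{j-1})}) ⊗ r_{rel(s_{j-2})}) ⋯ ) ⊗ r_{rel(s_0)}), where the inner ⊕-sum ranges over all directed walks (s_{j-1},…,s_0) of length j in T ending at z, rel(s) denotes the relation (second component) of the triple s, and the ⊗-product multiplies, left-associated, the relation embeddings of all j triples of the walk in order from the earliest triple to the triple entering z. -/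
section Aux

variable {V R M : Type*} [Fintype V] [Fintype R] [DecidableEq V] [DecidableEq R]
  [CommMonoid M]

/-- auxiliary: the set of directed walks of length `j+1` in `T` ending at `z`. -/
def wsetAux (T : Finset (V × R × V)) (j : ℕ) (z : V) :
    Finset (Fin (j + 1) → V × R × V) :=
  Finset.univ.filter (fun w : Fin (j + 1) → V × R × V =>
    (∀ m : Fin (j + 1), w m ∈ T) ∧
    (∀ m m' : Fin (j + 1), (m' : ℕ) = (m : ℕ) + 1 → (w m).2.2 = (w m').1) ∧
    (w (Fin.last j)).2.2 = z)

theorem mem_wsetAux {T : Finset (V × R × V)} {j : ℕ} {z : V}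
    {w : Fin (j + 1) → V × R × V} :
    w ∈ wsetAux T j z ↔
      (∀ m : Fin (j + 1), w m ∈ T) ∧
      (∀ m m' : Fin (j + 1), (m' : ℕ) = (m : ℕ) + 1 → (w m).2.2 = (w m').1) ∧
      (w (Fin.last j)).2.2 = z := by
  simp [wsetAux]

theorem otimes_prodAux (otimes : M → M → M) (hzero : ∀ a : M, otimes 1 a = 1)
    (hdistrib : ∀ a b c : M, otimes (a * b) c = otimes a c * otimes b c)
    {ι : Type*} (s : Finset ι) (f : ι → M) (c : M) :
    otimes (∏ x ∈ s, f x) c = ∏ x ∈ s, otimes (f x) c := by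
  classical
  induction s using Finset.cons_induction with
  | empty => simpa using hzero c
  | cons a s ha ih => rw [Finset.prod_cons, hdistrib, ih, Finset.prod_cons]

theorem prod_wsetAux_zero (T : Finset (V × R × V)) (z : V) (F : (V × R × V) → M) :
    ∏ w ∈ wsetAux T 0 z, F (w 0) = ∏ t ∈ T.filter (fun t => t.2.2 = z), F t := by
  refine Finset.prod_bij' (fun w _ => w 0) (fun t _ => fun _ => t) ?hi ?hj ?li ?ri ?h
  case hi =>
    intro w hw
    rw [mem_wsetAux] at hw
    simp only [Finset.mem_filter]
    exact ⟨hw.1 0, hw.2.2⟩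
  case hj =>
    intro t ht
    rw [Finset.mem_filter] at ht
    rw [mem_wsetAux]
    exact ⟨fun m => ht.1, fun m m' hmm => by omega, ht.2⟩
  case li =>
    intro w hw
    funext m
    show w 0 = w m
    rw [Subsingleton.elim (0 : Fin 1) m]
  case ri => intro t ht; rfl
  case h => intro w hw; rfl

theorem prod_wsetAux_succ (T : Finset (V × R × V)) (j : ℕ) (z : V)
    (F : (Fin (j + 1 + 1) → V × R × V) → M) :
    ∏ t ∈ T.filter (fun t => t.2.2 = z), ∏ w ∈ wsetAux T j t.1, F (Fin.snoc w t)
      = ∏ w ∈ wsetAux T (j + 1) z, F w := by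
  rw [Finset.prod_sigma' (T.filter (fun t => t.2.2 = z)) (fun t => wsetAux T j t.1)
    (fun t w => F (Fin.snoc w t))]
  refine Finset.prod_bij' (fun p _ => Fin.snoc p.2 p.1)
    (fun w _ => ⟨w (Fin.last (j + 1)), fun m => w m.castSucc⟩) ?hi ?hj ?li ?ri ?h
  case hi =>
    rintro ⟨t, w⟩ hp
    rw [Finset.mem_sigma, Finset.mem_filter, mem_wsetAux] at hp
    obtain ⟨⟨htT, htz⟩, hwT, hchain, hend⟩ := hp
    dsimp only at htT htz hwT hchain hend ⊢
    rw [mem_wsetAux]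
    refine ⟨?_, ?_, ?_⟩
    · intro m
      cases m using Fin.lastCases with
      | last => rw [Fin.snoc_last]; exact htT
      | cast i => rw [Fin.snoc_castSucc]; exact hwT i
    · intro m m' hmm
      have hm'le : (m' : ℕ) ≤ j + 1 := Nat.lt_succ_iff.mp m'.isLt
      have hmlt : (m : ℕ) < j + 1 := by omega
      rcases Nat.lt_or_ge (m' : ℕ) (j + 1) with hlt | hge
      · have hm : m = Fin.castSucc ⟨(m : ℕ), hmlt⟩ := Fin.ext (by simp)
        have hm' : m' = Fin.castSucc ⟨(m' : ℕ), hlt⟩ := Fin.ext (by simp)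
        rw [hm, hm', Fin.snoc_castSucc, Fin.snoc_castSucc]
        exact hchain _ _ hmm
      · have hm' : m' = Fin.last (j + 1) := Fin.ext (by simp; omega)
        have hm : m = Fin.castSucc (Fin.last j) := Fin.ext (by simp; omega)
        rw [hm, hm', Fin.snoc_castSucc, Fin.snoc_last, hend]
    · rw [Fin.snoc_last]; exact htz
  case hj =>
    intro w hw
    rw [mem_wsetAux] at hw
    obtain ⟨hwT, hchain, hend⟩ := hw
    rw [Finset.mem_sigma, Finset.mem_filter]
    refine ⟨⟨hwT _, hend⟩, ?_⟩
    rw [mem_wsetAux]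
    exact ⟨fun m => hwT _, fun m m' hmm => hchain _ _ (by simpa using hmm),
      hchain (Fin.castSucc (Fin.last j)) (Fin.last (j + 1)) (by simp)⟩
  case li =>
    rintro ⟨t, w⟩ hp
    refine Sigma.ext ?_ ?_
    · show (Fin.snoc w t : Fin (j + 1 + 1) → V × R × V) (Fin.last (j + 1)) = t
      rw [Fin.snoc_last]
    · show HEq (fun m : Fin (j + 1) =>
        (Fin.snoc w t : Fin (j + 1 + 1) → V × R × V) m.castSucc) w
      refine heq_of_eq ?_
      funext i
      rw [Fin.snoc_castSucc]
  case ri =>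
    intro w hw
    funext m
    show (Fin.snoc (fun i : Fin (j + 1) => w i.castSucc) (w (Fin.last (j + 1)))
      : Fin (j + 1 + 1) → V × R × V) m = w m
    cases m using Fin.lastCases with
    | last => rw [Fin.snoc_last]
    | cast i => rw [Fin.snoc_castSucc]
  case h => intro p hp; rfl

theorem walk_expAux (T : Finset (V × R × V)) (r : R → M) (otimes : M → M → M)
    (hzero : ∀ a : M, otimes 1 a = 1)
    (hdistrib : ∀ a b c : M, otimes (a * b) c = otimes a c * otimes b c)
    (h : ℕ → V → M) (e : ℕ → V × R × V → M)
    (hh0 : ∀ z : V, h 0 z = 1)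
    (hh : ∀ k : ℕ, 1 ≤ k → ∀ z : V,
      h k z = ∏ t ∈ T.filter (fun t => t.2.2 = z),
        (otimes (h (k - 1) t.1) (r t.2.1) * otimes (e (k - 1) t) (r t.2.1)))
    (z : V) (k : ℕ) (hk : 1 ≤ k) :
    h k z = ∏ j ∈ Finset.range k, ∏ w ∈ wsetAux T j z,
      List.foldl otimes (e (k - (j + 1)) (w 0))
        (List.ofFn (fun m : Fin (j + 1) => r (w m).2.1)) := by
  induction k, hk using Nat.le_induction generalizing z with
  | base =>
    rw [hh 1 le_rfl z, Finset.range_one, Finset.prod_singleton]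
    simp only [List.ofFn_succ, List.ofFn_zero, List.foldl_cons, List.foldl_nil,
      hh0, hzero, one_mul, Nat.sub_self]
    exact (prod_wsetAux_zero T z (fun t => otimes (e 0 t) (r t.2.1))).symm
  | succ k hk ih =>
    rw [hh (k + 1) (by omega) z]
    simp only [Nat.add_sub_cancel]
    rw [Finset.prod_mul_distrib, Finset.prod_range_succ']
    congr 1
    · calc ∏ t ∈ T.filter (fun t => t.2.2 = z), otimes (h k t.1) (r t.2.1)
          = ∏ t ∈ T.filter (fun t => t.2.2 = z), ∏ j ∈ Finset.range k,
              ∏ w ∈ wsetAux T j t.1,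
              otimes (List.foldl otimes (e (k - (j + 1)) (w 0))
                (List.ofFn (fun m : Fin (j + 1) => r (w m).2.1))) (r t.2.1) := by
            refine Finset.prod_congr rfl fun t ht => ?_
            rw [ih t.1, otimes_prodAux otimes hzero hdistrib]
            exact Finset.prod_congr rfl fun j hj =>
              otimes_prodAux otimes hzero hdistrib _ _ _
        _ = ∏ j ∈ Finset.range k, ∏ t ∈ T.filter (fun t => t.2.2 = z),
              ∏ w ∈ wsetAux T j t.1,
              otimes (List.foldl otimes (e (k - (j + 1)) (w 0))
                (List.ofFn (fun m : Fin (j + 1) => r (w m).2.1))) (r t.2.1) :=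
            Finset.prod_comm
        _ = ∏ j ∈ Finset.range k, ∏ w ∈ wsetAux T (j + 1) z,
              List.foldl otimes (e (k + 1 - (j + 1 + 1)) (w 0))
                (List.ofFn (fun m : Fin (j + 1 + 1) => r (w m).2.1)) := by
            refine Finset.prod_congr rfl fun j hj => ?_
            rw [← prod_wsetAux_succ T j z (fun w => List.foldl otimes
              (e (k + 1 - (j + 1 + 1)) (w 0))
              (List.ofFn (fun m : Fin (j + 1 + 1) => r (w m).2.1)))]
            refine Finset.prod_congr rfl fun t ht => Finset.prod_congr rfl fun w hw => ?_
            have h0 : (Fin.snoc w t : Fin (j + 1 + 1) → V × R × V) 0 = w 0 := by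
              have h00 : (0 : Fin (j + 1 + 1)) = Fin.castSucc 0 := rfl
              rw [h00, Fin.snoc_castSucc]
            rw [List.ofFn_succ' (fun m : Fin (j + 1 + 1) =>
              r ((Fin.snoc w t : Fin (j + 1 + 1) → V × R × V) m).2.1)]
            simp only [Fin.snoc_castSucc, Fin.snoc_last, List.concat_eq_append,
              List.foldl_concat, Nat.succ_sub_succ, h0]
    · rw [← prod_wsetAux_zero T z (fun t => otimes (e k t) (r t.2.1))]
      refine Finset.prod_congr rfl fun w hw => ?_
      simp only [List.ofFn_succ, List.ofFn_zero, List.foldl_cons, List.foldl_nil,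
        Nat.add_sub_cancel]

end Aux

structure WrapM (d : ℕ) : Type where
  val : Fin d → ℝ

theorem WrapM.ext' {d : ℕ} {a b : WrapM d} (h : a.val = b.val) : a = b := by
  cases a; cases b; cases h; rfl

theorem prod_eq_fold_of {M : Type*} [CommMonoid M] {α : Type*} (op : α → α → α)
    (hcomm : Std.Commutative op) (hassoc : Std.Associative op) (z : α)
    (v : M → α) (h1 : v 1 = z) (hmul : ∀ a b : M, v (a * b) = op (v a) (v b))
    {ι : Type*} (s : Finset ι) (f : ι → M) :
    v (∏ x ∈ s, f x) = Finset.fold op z (fun x => v (f x)) s := by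
  classical
  induction s using Finset.cons_induction with
  | empty => simpa using h1
  | cons a s ha ih => rw [Finset.prod_cons, Finset.fold_cons, hmul, ih]

theorem foldl_val {M α : Type*} (ot : M → M → M) (ot' : α → α → α) (v : M → α)
    (hv : ∀ a b : M, v (ot a b) = ot' (v a) (v b)) :
    ∀ (l : List M) (b : M), v (List.foldl ot b l) = List.foldl ot' (v b) (l.map v)
  | [], b => rfl
  | a :: l, b => by
    rw [List.foldl_cons, List.map_cons, List.foldl_cons, ← hv]
    exact foldl_val ot ot' v hv l (ot b a)



/-- Walk expansion of node features in the general-operator setting: for every node `z`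
and every `k ≥ 1`, `h^k_z` is the `⊕`-sum over walk lengths `j = 1, …, k` (written as
`j + 1` with `j ∈ range k`) and over all directed walks in `T` of that length ending at
`z` (indexed so that `w 0` is the earliest triple and the head of the last triple is `z`)
of the left-associated `⊗`-product starting from `e^{k-j}` of the earliest triple and
multiplying the relation embeddings of all triples of the walk in order. -/
theorem node_feature_walk_expansion_general_ops
    {V R : Type*} [Fintype V] [Fintype R] [DecidableEq V] [DecidableEq R]
    (T : Finset (V × R × V)) (d : ℕ) (hd : 1 ≤ d) (r : R → Fin d → ℝ)
    (op otimes : (Fin d → ℝ) → (Fin d → ℝ) → (Fin d → ℝ))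
    (hcomm : Std.Commutative op) (hassoc : Std.Associative op)
    (hid : ∀ a : Fin d → ℝ, op 0 a = a)
    (hzero : ∀ a : Fin d → ℝ, otimes 0 a = 0)
    (hdistrib : ∀ a b c : Fin d → ℝ, otimes (op a b) c = op (otimes a c) (otimes b c))
    (h : ℕ → V → Fin d → ℝ) (e : ℕ → V × R × V → Fin d → ℝ)
    (hh0 : ∀ z : V, h 0 z = 0)
    (hh : ∀ k : ℕ, 1 ≤ k → ∀ z : V,
      h k z = @Finset.fold _ _ op hcomm hassoc 0
        (fun t => op (otimes (h (k - 1) t.1) (r t.2.1)) (otimes (e (k - 1) t) (r t.2.1)))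
        (T.filter (fun t => t.2.2 = z)))
    (he : ∀ k : ℕ, 1 ≤ k → ∀ t ∈ T, e k t = op (h k t.1) (e (k - 1) t))
    (z : V) (k : ℕ) (hk : 1 ≤ k) :
    h k z =
      @Finset.fold _ _ op hcomm hassoc 0
        (fun j =>
          @Finset.fold _ _ op hcomm hassoc 0
            (fun w : Fin (j + 1) → V × R × V =>
              List.foldl otimes (e (k - (j + 1)) (w 0))
                (List.ofFn (fun m : Fin (j + 1) => r (w m).2.1)))
            (Finset.univ.filter (fun w : Fin (j + 1) → V × R × V =>
              (∀ m : Fin (j + 1), w m ∈ T) ∧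
              (∀ m m' : Fin (j + 1), (m' : ℕ) = (m : ℕ) + 1 → (w m).2.2 = (w m').1) ∧
              (w (Fin.last j)).2.2 = z)))
        (Finset.range k) := by
  letI : CommMonoid (WrapM d) :=
    { mul := fun a b => ⟨op a.val b.val⟩
      one := ⟨0⟩
      mul_assoc := fun a b c => WrapM.ext' (hassoc.assoc _ _ _)
      one_mul := fun a => WrapM.ext' (hid _)
      mul_one := fun a => WrapM.ext' ((hcomm.comm _ _).trans (hid _))
      mul_comm := fun a b => WrapM.ext' (hcomm.comm _ _) }
  have key := walk_expAux (M := WrapM d) T (fun y => WrapM.mk (r y))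
    (fun a b => WrapM.mk (otimes a.val b.val))
    (fun a => WrapM.ext' (hzero a.val))
    (fun a b c => WrapM.ext' (hdistrib a.val b.val c.val))
    (fun k x => WrapM.mk (h k x)) (fun k t => WrapM.mk (e k t))
    (fun x => WrapM.ext' (hh0 x))
    (fun k hk z => WrapM.ext' ((hh k hk z).trans
      (prod_eq_fold_of op hcomm hassoc 0 WrapM.val rfl (fun a b => rfl) _ _).symm))
    z k hk
  refine (congrArg WrapM.val key).trans ?_
  rw [prod_eq_fold_of op hcomm hassoc 0 WrapM.val rfl (fun a b => rfl)]
  refine Finset.fold_congr fun j hj => ?_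
  rw [prod_eq_fold_of op hcomm hassoc 0 WrapM.val rfl (fun a b => rfl)]
  have hset : wsetAux T j z = Finset.univ.filter (fun w : Fin (j + 1) → V × R × V =>
      (∀ m : Fin (j + 1), w m ∈ T) ∧
      (∀ m m' : Fin (j + 1), (m' : ℕ) = (m : ℕ) + 1 → (w m).2.2 = (w m').1) ∧
      (w (Fin.last j)).2.2 = z) := rfl
  rw [hset]
  refine Finset.fold_congr fun w hw => ?_
  rw [foldl_val (fun a b => WrapM.mk (otimes a.val b.val)) otimes WrapM.val
    (fun a b => rfl), List.map_ofFn]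
  rfl
end
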